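/- Let s : A → A be the automorphism s(x,y) = (−x, y) of A = (ℤ/pℤ) × (ℤ/pℤ). If μ is a 2-cocycle on A with values in kˣ such that the 2-cocycle (x,y) ↦ μ(s(x), s(y)) is cohomologous to μ, then μ is a coboundary; i.e., the only s-invariant class in H²(A, kˣ) is the trivial one. -/

import Mathlib

/-!
The commutator pairing `β(a, b) = μ(a, b) / μ(b, a)` of a 2-cocycle is an alternating bicharacter
that only depends on the cohomology class of `μ`. For the standard basis `e₁, e₂`, invariance
under `s` gives `β(e₂, e₁)⁻¹ = β(e₂, -e₁) = β(e₂, e₁)`, while `β(e₂, e₁) ^ p = β(e₂, p • e₁) = 1`;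
as `p` is odd, `β` is trivial, i.e. `μ` is symmetric. A normalized symmetric cocycle defines a
commutative extension of `A` by `kˣ`. Since `kˣ` is divisible, each generator of `A` lifts to an
element of order dividing `p`, which gives a splitting of the extension, and a splitting
trivializes `μ`.
-/

def IsTwoCocycle {A : Type*} [AddCommGroup A] {k : Type*} [Field k]
    (μ : A → A → kˣ) : Prop :=
  ∀ a b c : A, μ a b * μ (a + b) c = μ b c * μ a (b + c)

def IsCoboundary {A : Type*} [AddCommGroup A] {k : Type*} [Field k]
    (μ : A → A → kˣ) : Prop :=
  ∃ f : A → kˣ, ∀ a b : A, μ a b = f a * f b * (f (a + b))⁻¹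

def Cohomologous {A : Type*} [AddCommGroup A] {k : Type*} [Field k]
    (μ ν : A → A → kˣ) : Prop :=
  IsCoboundary (fun a b => μ a b * (ν a b)⁻¹)

section CommPairing

variable {A : Type*} {k : Type*} [Field k]

def commPairing (μ : A → A → kˣ) (a b : A) : kˣ := μ a b * (μ b a)⁻¹

theorem commPairing_eq_one_iff {μ : A → A → kˣ} {a b : A} :
    commPairing μ a b = 1 ↔ μ a b = μ b a :=
  mul_inv_eq_one

theorem commPairing_swap (μ : A → A → kˣ) (a b : A) :
    commPairing μ b a = (commPairing μ a b)⁻¹ := by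
  simp only [commPairing, mul_inv_rev, inv_inv]

theorem commPairing_self (μ : A → A → kˣ) (a : A) : commPairing μ a a = 1 :=
  mul_inv_cancel _

theorem commPairing_mul (μ ν : A → A → kˣ) (a b : A) :
    commPairing (fun a b => μ a b * ν a b) a b = commPairing μ a b * commPairing ν a b := by
  simp only [commPairing, mul_inv, mul_mul_mul_comm]

end CommPairing

section Cocycles

variable {A : Type*} [AddCommGroup A] {k : Type*} [Field k]

theorem IsCoboundary.symm {μ : A → A → kˣ} (h : IsCoboundary μ) (a b : A) :
    μ a b = μ b a := by
  obtain ⟨f, hf⟩ := h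
  rw [hf, hf, add_comm, mul_comm (f a)]

theorem IsCoboundary.mul {μ ν : A → A → kˣ} (hμ : IsCoboundary μ) (hν : IsCoboundary ν) :
    IsCoboundary (fun a b => μ a b * ν a b) := by
  obtain ⟨f, hf⟩ := hμ
  obtain ⟨g, hg⟩ := hν
  refine ⟨fun a => f a * g a, fun a b => ?_⟩
  simp only [hf, hg, mul_inv]
  ac_rfl

theorem isCoboundary_const (c : kˣ) : IsCoboundary (fun (_ _ : A) => c) :=
  ⟨fun _ => c, fun _ _ => (mul_inv_cancel_right c c).symm⟩

theorem Cohomologous.commPairing_eq {μ ν : A → A → kˣ} (h : Cohomologous μ ν) (a b : A) :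
    commPairing μ a b = commPairing ν a b := by
  have hsplit := commPairing_mul (fun a b => μ a b * (ν a b)⁻¹) ν a b
  simp only [inv_mul_cancel_right] at hsplit
  rw [hsplit, commPairing_eq_one_iff.mpr (h.symm a b), one_mul]

namespace IsTwoCocycle

variable {μ : A → A → kˣ} (hμ : IsTwoCocycle μ)
include hμ

theorem apply_zero_right (a : A) : μ a 0 = μ 0 0 := by
  have h := hμ a 0 0
  rw [add_zero, add_zero] at h
  exact mul_right_cancel h

theorem mul_const (c : kˣ) : IsTwoCocycle (fun a b => μ a b * c) := by
  intro a b d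
  simp only [mul_mul_mul_comm _ c, hμ a b d]

theorem commPairing_add_right (a b d : A) :
    commPairing μ a (b + d) = commPairing μ a b * commPairing μ a d := by
  have h₁ : μ a (b + d) = μ a b * μ (a + b) d * (μ b d)⁻¹ :=
    eq_mul_inv_of_mul_eq (by rw [hμ, mul_comm])
  have h₂ : μ (b + d) a = μ d a * μ b (a + d) * (μ b d)⁻¹ :=
    eq_mul_inv_of_mul_eq (by rw [mul_comm, hμ, add_comm d a])
  have h₃ : μ (a + b) d = μ a d * μ b (a + d) * (μ b a)⁻¹ :=
    eq_mul_inv_of_mul_eq (by rw [mul_comm, add_comm a b, hμ])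
  simp only [commPairing, h₁, h₂, h₃, Units.ext_iff, Units.val_mul, Units.val_inv_eq_inv_val]
  field_simp

theorem commPairing_zero_right (a : A) : commPairing μ a 0 = 1 := by
  have h := hμ.commPairing_add_right a 0 0
  rw [add_zero] at h
  exact mul_eq_left.mp h.symm

theorem commPairing_neg_right (a b : A) : commPairing μ a (-b) = (commPairing μ a b)⁻¹ :=
  eq_inv_of_mul_eq_one_right (by rw [← hμ.commPairing_add_right, add_neg_cancel,
    hμ.commPairing_zero_right])

theorem commPairing_nsmul_right (n : ℕ) (a b : A) :
    commPairing μ a (n • b) = commPairing μ a b ^ n := by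
  induction n with
  | zero => rw [zero_nsmul, pow_zero, hμ.commPairing_zero_right]
  | succ n ih => rw [succ_nsmul, hμ.commPairing_add_right, ih, pow_succ]

end IsTwoCocycle

end Cocycles

section ZModProd

variable {m n : ℕ} [NeZero m] [NeZero n] {k : Type*} [Field k]

theorem zmod_prod_eq_val_nsmul_add (a : ZMod m × ZMod n) :
    a = a.1.val • (1, 0) + a.2.val • (0, 1) := by
  ext <;> simp

theorem IsTwoCocycle.symm_of_commPairing_eq_one {μ : ZMod m × ZMod n → ZMod m × ZMod n → kˣ}
    (hμ : IsTwoCocycle μ) (h : commPairing μ (1, 0) (0, 1) = 1) (a b : ZMod m × ZMod n) :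
    μ a b = μ b a := by
  have hright : ∀ c, commPairing μ c (1, 0) = 1 → commPairing μ c (0, 1) = 1 →
      ∀ b, commPairing μ c b = 1 := by
    intro c h₁ h₂ b
    rw [zmod_prod_eq_val_nsmul_add b, hμ.commPairing_add_right, hμ.commPairing_nsmul_right,
      hμ.commPairing_nsmul_right, h₁, h₂, one_pow, one_pow, one_mul]
  have h' : commPairing μ (0, 1) (1, 0) = 1 := by rw [commPairing_swap, h, inv_one]
  have he₁ := hright _ (commPairing_self μ _) h
  have he₂ := hright _ h' (commPairing_self μ _)
  refine commPairing_eq_one_iff.mp (hright a ?_ ?_ b)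
  · rw [commPairing_swap, he₁, inv_one]
  · rw [commPairing_swap, he₂, inv_one]

end ZModProd

theorem IsTwoCocycle.symm_of_commPairing_neg_fst_invariant {p : ℕ} (hodd : Odd p)
    {k : Type*} [Field k] {μ : ZMod p × ZMod p → ZMod p × ZMod p → kˣ} (hμ : IsTwoCocycle μ)
    (hinv : ∀ a b, commPairing μ (-a.1, a.2) (-b.1, b.2) = commPairing μ a b)
    (a b : ZMod p × ZMod p) : μ a b = μ b a := by
  have : NeZero p := ⟨hodd.pos.ne'⟩
  set ζ := commPairing μ (0, 1) (1, 0) with hζ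
  have hζ_inv : ζ⁻¹ = ζ := by
    have h : commPairing μ (0, 1) (-(1, 0)) = ζ := by
      convert hinv (0, 1) (1, 0) using 2 <;> simp
    rwa [hμ.commPairing_neg_right] at h
  have hζ_sq : ζ ^ 2 = 1 := by rw [sq, ← mul_eq_one_iff_eq_inv.mpr hζ_inv.symm]
  have hζ_pow : ζ ^ p = 1 := by
    rw [hζ, ← hμ.commPairing_nsmul_right, show p • ((1, 0) : ZMod p × ZMod p) = 0 by ext <;> simp,
      hμ.commPairing_zero_right]
  have hζ_one : ζ = 1 :=
    (pow_eq_one_iff_of_coprime (Nat.coprime_two_left.mpr hodd)).mp ⟨hζ_sq, hζ_pow⟩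
  refine hμ.symm_of_commPairing_eq_one ?_ a b
  rw [commPairing_swap, ← hζ, hζ_one, inv_one]

structure NormalizedSymmCocycle (A : Type*) [AddCommGroup A] (k : Type*) [Field k] where
  toFun : A → A → kˣ
  isTwoCocycle : IsTwoCocycle toFun
  symm : ∀ a b, toFun a b = toFun b a
  apply_zero_zero : toFun 0 0 = 1

namespace NormalizedSymmCocycle

variable {A : Type*} [AddCommGroup A] {k : Type*} [Field k] (μ : NormalizedSymmCocycle A k)

instance : CoeFun (NormalizedSymmCocycle A k) (fun _ => A → A → kˣ) := ⟨toFun⟩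

theorem apply_zero_right (a : A) : μ a 0 = 1 :=
  (μ.isTwoCocycle.apply_zero_right a).trans μ.apply_zero_zero

@[ext]
structure Extension (μ : NormalizedSymmCocycle A k) where
  unit : kˣ
  base : A

namespace Extension

instance : Mul μ.Extension := ⟨fun x y => ⟨x.unit * y.unit * μ x.base y.base, x.base + y.base⟩⟩

instance : One μ.Extension := ⟨⟨1, 0⟩⟩

variable {μ}

@[simp] theorem mul_unit (x y : μ.Extension) : (x * y).unit = x.unit * y.unit * μ x.base y.base :=
  rfl

@[simp] theorem mul_base (x y : μ.Extension) : (x * y).base = x.base + y.base := rfl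

@[simp] theorem one_unit : (1 : μ.Extension).unit = 1 := rfl

@[simp] theorem one_base : (1 : μ.Extension).base = 0 := rfl

instance : CommMonoid μ.Extension where
  mul_assoc x y z := by
    refine Extension.ext ?_ (add_assoc _ _ _)
    simp only [mul_unit, mul_base]
    calc x.unit * y.unit * μ x.base y.base * z.unit * μ (x.base + y.base) z.base
        = x.unit * y.unit * z.unit * (μ x.base y.base * μ (x.base + y.base) z.base) := by
          ac_rfl
      _ = x.unit * y.unit * z.unit * (μ y.base z.base * μ x.base (y.base + z.base)) := by
          rw [μ.isTwoCocycle]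
      _ = x.unit * (y.unit * z.unit * μ y.base z.base) * μ x.base (y.base + z.base) := by
          ac_rfl
  one_mul x := by ext <;> simp [μ.symm 0, μ.apply_zero_right]
  mul_one x := by ext <;> simp [μ.apply_zero_right]
  mul_comm x y := by
    refine Extension.ext ?_ (add_comm _ _)
    simp only [mul_unit, mul_comm x.unit, μ.symm x.base]

@[simp] theorem pow_base (x : μ.Extension) (n : ℕ) : (x ^ n).base = n • x.base := by
  induction n with
  | zero => rw [pow_zero, zero_nsmul, one_base]
  | succ n ih => rw [pow_succ, mul_base, ih, succ_nsmul]

end Extension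

open Extension

def central : kˣ →* μ.Extension where
  toFun u := ⟨u, 0⟩
  map_one' := rfl
  map_mul' u v := by ext <;> simp [μ.apply_zero_zero]

theorem mul_central (x : μ.Extension) (u : kˣ) : x * μ.central u = ⟨x.unit * u, x.base⟩ := by
  ext <;> simp [central, μ.apply_zero_right]

theorem eq_central_of_base_eq_zero {x : μ.Extension} (h : x.base = 0) : x = μ.central x.unit := by
  ext <;> simp [central, h]

theorem exists_lift_pow_eq_one [IsAlgClosed k] {n : ℕ} (hn : 0 < n) {a : A} (ha : n • a = 0) :
    ∃ y : μ.Extension, y.base = a ∧ y ^ n = 1 := by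
  set x : μ.Extension := ⟨1, a⟩
  obtain ⟨w, hw⟩ := IsAlgClosed.exists_pow_nat_eq ((x ^ n).unit : k) hn
  have hw₀ : w ≠ 0 := by
    rintro rfl
    exact (x ^ n).unit.ne_zero (by rw [← hw, zero_pow hn.ne'])
  refine ⟨x * μ.central (Units.mk0 w hw₀)⁻¹, by simp [mul_central, x], ?_⟩
  rw [mul_pow, ← map_pow, μ.eq_central_of_base_eq_zero (x := x ^ n) (by simpa [x] using ha),
    ← map_mul, inv_pow, mul_inv_eq_one.mpr, map_one]
  ext
  simp [hw]

theorem isCoboundary_of_addChar (σ : AddChar A μ.Extension) (hσ : ∀ a, (σ a).base = a) :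
    IsCoboundary μ := by
  refine ⟨fun a => (σ a).unit⁻¹, fun a b => ?_⟩
  have h := congrArg Extension.unit (σ.map_add_eq_mul a b)
  rw [mul_unit, hσ, hσ] at h
  rw [inv_inv, h, ← mul_inv, inv_mul_cancel_left]

theorem isCoboundary_of_zmod_prod [IsAlgClosed k] {m n : ℕ} [NeZero m] [NeZero n]
    (ν : NormalizedSymmCocycle (ZMod m × ZMod n) k) : IsCoboundary ν := by
  obtain ⟨y₁, hy₁, hy₁m⟩ := ν.exists_lift_pow_eq_one (NeZero.pos m)
    (a := ((1, 0) : ZMod m × ZMod n)) (by ext <;> simp)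
  obtain ⟨y₂, hy₂, hy₂n⟩ := ν.exists_lift_pow_eq_one (NeZero.pos n)
    (a := ((0, 1) : ZMod m × ZMod n)) (by ext <;> simp)
  refine ν.isCoboundary_of_addChar
    ((AddChar.zmodChar m hy₁m).compAddMonoidHom (AddMonoidHom.fst _ _) *
      (AddChar.zmodChar n hy₂n).compAddMonoidHom (AddMonoidHom.snd _ _)) fun a => ?_
  simp only [AddChar.mul_apply, AddChar.compAddMonoidHom_apply, AddChar.zmodChar_apply,
    mul_base, pow_base, hy₁, hy₂]
  exact (zmod_prod_eq_val_nsmul_add a).symm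

end NormalizedSymmCocycle

theorem IsTwoCocycle.isCoboundary_of_symm {k : Type*} [Field k] [IsAlgClosed k] {m n : ℕ}
    [NeZero m] [NeZero n] {μ : ZMod m × ZMod n → ZMod m × ZMod n → kˣ}
    (hμ : IsTwoCocycle μ) (hsymm : ∀ a b, μ a b = μ b a) : IsCoboundary μ := by
  let ν : NormalizedSymmCocycle (ZMod m × ZMod n) k :=
    ⟨fun a b => μ a b * (μ 0 0)⁻¹, hμ.mul_const _, fun a b => by rw [hsymm], mul_inv_cancel _⟩
  simpa [ν] using ν.isCoboundary_of_zmod_prod.mul (isCoboundary_const (μ 0 0))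


theorem stmt_11_general (p : ℕ) (hodd : Odd p)
    (k : Type*) [Field k] [IsAlgClosed k]
    (s : ZMod p × ZMod p → ZMod p × ZMod p)
    (hs : ∀ a : ZMod p × ZMod p, s a = (-a.1, a.2))
    (μ : (ZMod p × ZMod p) → (ZMod p × ZMod p) → kˣ)
    (hμ : IsTwoCocycle μ)
    (hinv : Cohomologous (fun x y => μ (s x) (s y)) μ) :
    IsCoboundary μ := by
  have : NeZero p := ⟨hodd.pos.ne'⟩
  have hpairing (a b : ZMod p × ZMod p) :
      commPairing μ (-a.1, a.2) (-b.1, b.2) = commPairing μ a b := by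
    rw [← hs, ← hs]
    exact hinv.commPairing_eq a b
  exact hμ.isCoboundary_of_symm (hμ.symm_of_commPairing_neg_fst_invariant hodd hpairing)

/-- For the automorphism `s(x,y) = (−x,y)` of `A = (ℤ/pℤ)²`,
the only `s`-invariant class in `H²(A, kˣ)` is the trivial one: if the
pullback of a 2-cocycle `μ` along `s` is cohomologous to `μ`, then `μ` is a
coboundary. -/
theorem stmt_11 (p : ℕ) (hp : p.Prime) (hodd : Odd p)
    (k : Type*) [Field k] [IsAlgClosed k] [CharZero k]
    (s : ZMod p × ZMod p → ZMod p × ZMod p)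
    (hs : ∀ a : ZMod p × ZMod p, s a = (-a.1, a.2))
    (μ : (ZMod p × ZMod p) → (ZMod p × ZMod p) → kˣ)
    (hμ : IsTwoCocycle μ)
    (hinv : Cohomologous (fun x y => μ (s x) (s y)) μ) :
    IsCoboundary μ :=
  stmt_11_general p hodd k s hs μ hμ hinv
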